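/- arXiv:1808.00166 — 3 statements merged into one kernel-verified Lean document; each statement's English description precedes it below -/
import Mathlib

section
/- Let f, φ : ℤ → ℝ be nonnegative summable sequences (with sufficient decay), with ∑ φ_i = 1, and let g = f * φ be their convolution. Define the autocorrelations F_j = ∑_i f_i f_{j+i} and G_j = ∑_i g_i g_{j+i}, and the focusing functionals J_F = ∑_j j² F_j and J_G = ∑_j j² G_j. Then J_G ≥ J_F. -/
open scoped BigOperators

set_option maxHeartbeats 1000000

/-- Convolution of sequences on ℤ (tsum version). -/
noncomputable def conv (f φ : ℤ → ℝ) (j : ℤ) : ℝ := ∑' i, f i * φ (j - i)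

/-- Autocorrelation of a sequence on ℤ (tsum version). -/
noncomputable def acorr (f : ℤ → ℝ) (t : ℤ) : ℝ := ∑' i, f i * f (i + t)

/-- Focusing functional: second moment of the autocorrelation. -/
noncomputable def Jfun (f : ℤ → ℝ) : ℝ := ∑' (t : ℤ), (t : ℝ) ^ 2 * acorr f t

/-- Shear equivalence `(t, i) ↦ (i, t + i)`. -/
def shearAdd : ℤ × ℤ ≃ ℤ × ℤ where
  toFun p := (p.2, p.1 + p.2)
  invFun q := (q.2 - q.1, q.1)
  left_inv := by rintro ⟨t, i⟩; simp
  right_inv := by rintro ⟨i, k⟩; simp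

/-- Shear equivalence `(j, i) ↦ (i, j - i)`. -/
def shearSub : ℤ × ℤ ≃ ℤ × ℤ where
  toFun p := (p.2, p.1 - p.2)
  invFun q := (q.1 + q.2, q.1)
  left_inv := by rintro ⟨j, i⟩; simp
  right_inv := by rintro ⟨i, a⟩; simp

lemma summable_coe_mul {f : ℤ → ℝ} (hf0 : ∀ i, 0 ≤ f i) (hf : Summable f)
    (hf2 : Summable (fun i : ℤ => (i : ℝ) ^ 2 * f i)) :
    Summable (fun i : ℤ => (i : ℝ) * f i) := by
  apply Summable.of_abs
  apply Summable.of_nonneg_of_le (fun i => abs_nonneg _) _ (hf.add hf2)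
  intro i
  rw [abs_mul, abs_of_nonneg (hf0 i)]
  have h1 : |(i : ℝ)| ≤ 1 + (i : ℝ) ^ 2 := by
    nlinarith [sq_abs (i : ℝ), abs_nonneg (i : ℝ)]
  have := hf0 i
  calc |(i : ℝ)| * f i ≤ (1 + (i : ℝ) ^ 2) * f i := by nlinarith
    _ = f i + (i : ℝ) ^ 2 * f i := by ring

lemma summable_prod_mul {u v : ℤ → ℝ} (hu : Summable u) (hv : Summable v) :
    Summable (fun q : ℤ × ℤ => u q.1 * v q.2) :=
  summable_mul_of_summable_norm (by simpa using hu.abs) (by simpa using hv.abs)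

lemma tsum_prod_mul {u v : ℤ → ℝ} (hu : Summable u) (hv : Summable v) :
    ∑' q : ℤ × ℤ, u q.1 * v q.2 = (∑' i, u i) * (∑' i, v i) :=
  (tsum_mul_tsum_of_summable_norm (by simpa using hu.abs) (by simpa using hv.abs)).symm

/-- Key identity: `Jfun f = 2 S₀ S₂ - 2 S₁²`. -/
lemma Jfun_eq {f : ℤ → ℝ} (hf0 : ∀ i, 0 ≤ f i) (hf : Summable f)
    (hf2 : Summable (fun i : ℤ => (i : ℝ) ^ 2 * f i)) :
    Jfun f = 2 * (∑' i, f i) * (∑' i : ℤ, (i : ℝ) ^ 2 * f i) - 2 * (∑' i : ℤ, (i : ℝ) * f i) ^ 2 := by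
  have hf1 := summable_coe_mul hf0 hf hf2
  set G : ℤ × ℤ → ℝ := fun p => ((p.2 : ℝ) - (p.1 : ℝ)) ^ 2 * (f p.1 * f p.2) with hGdef
  have hG0 : ∀ p, 0 ≤ G p := fun p =>
    mul_nonneg (sq_nonneg _) (mul_nonneg (hf0 _) (hf0 _))
  have hA : Summable (fun p : ℤ × ℤ => f p.1 * ((p.2 : ℝ) ^ 2 * f p.2)) :=
    summable_prod_mul hf hf2
  have hB : Summable (fun p : ℤ × ℤ => ((p.1 : ℝ) ^ 2 * f p.1) * f p.2) :=
    summable_prod_mul hf2 hf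
  have hC : Summable (fun p : ℤ × ℤ => ((p.1 : ℝ) * f p.1) * ((p.2 : ℝ) * f p.2)) :=
    summable_prod_mul hf1 hf1
  have hbound : Summable (fun p : ℤ × ℤ =>
      2 * (((p.1 : ℝ) ^ 2 * f p.1) * f p.2) + 2 * (f p.1 * ((p.2 : ℝ) ^ 2 * f p.2))) :=
    (hB.mul_left 2).add (hA.mul_left 2)
  have hGsum : Summable G := by
    apply Summable.of_nonneg_of_le hG0 _ hbound
    intro p
    have h1 : 0 ≤ f p.1 * f p.2 := mul_nonneg (hf0 _) (hf0 _)
    have h2 : 0 ≤ ((p.1 : ℝ) + (p.2 : ℝ)) ^ 2 * (f p.1 * f p.2) :=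
      mul_nonneg (sq_nonneg _) h1
    simp only [hGdef]
    nlinarith [h2]
  have he : Summable (fun p : ℤ × ℤ => G (shearAdd p)) := by
    exact (Equiv.summable_iff shearAdd).mpr hGsum
  have hcomp : (fun p : ℤ × ℤ => G (shearAdd p)) =
      fun p : ℤ × ℤ => (p.1 : ℝ) ^ 2 * (f p.2 * f (p.2 + p.1)) := by
    funext p
    have : p.1 + p.2 = p.2 + p.1 := by ring
    simp only [hGdef, shearAdd, Equiv.coe_fn_mk, this]
    push_cast
    ring
  have step1 : Jfun f = ∑' (t : ℤ), ∑' (i : ℤ), (t : ℝ) ^ 2 * (f i * f (i + t)) := by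
    unfold Jfun acorr
    congr 1
    funext t
    rw [tsum_mul_left]
  have step2 : Jfun f = ∑' p : ℤ × ℤ, G p := by
    rw [step1, ← shearAdd.tsum_eq G]
    rw [show (fun p : ℤ × ℤ => G (shearAdd p)) = (G ∘ shearAdd) from rfl] at he hcomp
    rw [show (∑' p : ℤ × ℤ, G (shearAdd p)) = ∑' p : ℤ × ℤ, (G ∘ shearAdd) p from rfl]
    rw [Summable.tsum_prod he]
    simp only [hcomp]
  have hsplit : ∀ p : ℤ × ℤ, G p =
      (f p.1 * ((p.2 : ℝ) ^ 2 * f p.2) + ((p.1 : ℝ) ^ 2 * f p.1) * f p.2) -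
        2 * (((p.1 : ℝ) * f p.1) * ((p.2 : ℝ) * f p.2)) := by
    intro p; simp only [hGdef]; ring
  rw [step2]
  calc ∑' p : ℤ × ℤ, G p
      = ∑' p : ℤ × ℤ, ((f p.1 * ((p.2 : ℝ) ^ 2 * f p.2) + ((p.1 : ℝ) ^ 2 * f p.1) * f p.2) -
          2 * (((p.1 : ℝ) * f p.1) * ((p.2 : ℝ) * f p.2))) := by
        exact tsum_congr hsplit
    _ = (∑' p : ℤ × ℤ, (f p.1 * ((p.2 : ℝ) ^ 2 * f p.2) + ((p.1 : ℝ) ^ 2 * f p.1) * f p.2)) -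
          ∑' p : ℤ × ℤ, 2 * (((p.1 : ℝ) * f p.1) * ((p.2 : ℝ) * f p.2)) :=
        Summable.tsum_sub (hA.add hB) (hC.mul_left 2)
    _ = ((∑' p : ℤ × ℤ, f p.1 * ((p.2 : ℝ) ^ 2 * f p.2)) +
          (∑' p : ℤ × ℤ, ((p.1 : ℝ) ^ 2 * f p.1) * f p.2)) -
          2 * ∑' p : ℤ × ℤ, (((p.1 : ℝ) * f p.1) * ((p.2 : ℝ) * f p.2)) := by
        rw [Summable.tsum_add hA hB, tsum_mul_left]
    _ = ((∑' i, f i) * (∑' i : ℤ, (i : ℝ) ^ 2 * f i) +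
          (∑' i : ℤ, (i : ℝ) ^ 2 * f i) * (∑' i, f i)) -
          2 * ((∑' i : ℤ, (i : ℝ) * f i) * (∑' i : ℤ, (i : ℝ) * f i)) := by
        rw [tsum_prod_mul hf hf2, tsum_prod_mul hf2 hf, tsum_prod_mul hf1 hf1]
    _ = 2 * (∑' i, f i) * (∑' i : ℤ, (i : ℝ) ^ 2 * f i) - 2 * (∑' i : ℤ, (i : ℝ) * f i) ^ 2 := by
        ring

/-- Weighted sums of a convolution as a double sum. -/
lemma conv_moment (f φ : ℤ → ℝ) (w : ℤ → ℝ)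
    (hH : Summable (fun q : ℤ × ℤ => w (q.1 + q.2) * (f q.1 * φ q.2))) :
    ∑' j, w j * conv f φ j = ∑' q : ℤ × ℤ, w (q.1 + q.2) * (f q.1 * φ q.2) := by
  set H : ℤ × ℤ → ℝ := fun q => w (q.1 + q.2) * (f q.1 * φ q.2) with hHdef
  have he : Summable (H ∘ shearSub) := (Equiv.summable_iff shearSub).mpr hH
  have hcomp : (H ∘ shearSub) = fun p : ℤ × ℤ => w p.1 * (f p.2 * φ (p.1 - p.2)) := by
    funext p
    have : p.2 + (p.1 - p.2) = p.1 := by ring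
    simp only [hHdef, shearSub, Function.comp, Equiv.coe_fn_mk, this]
  calc ∑' j, w j * conv f φ j
      = ∑' j, ∑' i, w j * (f i * φ (j - i)) := by
        unfold conv
        congr 1
        funext j
        rw [tsum_mul_left]
    _ = ∑' p : ℤ × ℤ, (H ∘ shearSub) p := by
        rw [Summable.tsum_prod he]
        simp only [hcomp]
    _ = ∑' q : ℤ × ℤ, H q := shearSub.tsum_eq H

/-- focusing inequality `J_G ≥ J_F` for `g = f * φ`. -/
theorem focusing_inequality
    (f φ : ℤ → ℝ)
    (hf0 : ∀ i, 0 ≤ f i) (hφ0 : ∀ i, 0 ≤ φ i)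
    (hf : Summable f) (hφ : Summable φ)
    (hf2 : Summable (fun i : ℤ => (i : ℝ) ^ 2 * f i))
    (hφ2 : Summable (fun i : ℤ => (i : ℝ) ^ 2 * φ i))
    (hφ1 : ∑' i, φ i = 1) :
    Jfun f ≤ Jfun (conv f φ) := by
  have hf1 := summable_coe_mul hf0 hf hf2
  have hφ1' := summable_coe_mul hφ0 hφ hφ2
  set g := conv f φ with hgdef
  -- nonnegativity of g
  have hg0 : ∀ j, 0 ≤ g j := fun j =>
    tsum_nonneg fun i => mul_nonneg (hf0 i) (hφ0 _)
  -- summability of the basic product family and its sheared version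
  have hP : Summable (fun q : ℤ × ℤ => f q.1 * φ q.2) := summable_prod_mul hf hφ
  -- summability of g
  have hgsum : Summable g := by
    have h0 : 0 ≤ fun p : ℤ × ℤ => f p.2 * φ (p.1 - p.2) := fun p =>
      mul_nonneg (hf0 _) (hφ0 _)
    have hS : Summable (fun p : ℤ × ℤ => f p.2 * φ (p.1 - p.2)) := by
      have := (Equiv.summable_iff shearSub).mpr hP
      exact this
    exact ((summable_prod_of_nonneg h0).mp hS).2
  -- summability families for weights
  have hid : (fun q : ℤ × ℤ => ((q.1 + q.2 : ℤ) : ℝ) * (f q.1 * φ q.2)) =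
      fun q : ℤ × ℤ => ((q.1 : ℝ) * f q.1) * φ q.2 + f q.1 * ((q.2 : ℝ) * φ q.2) := by
    funext q; push_cast; ring
  have hidS : Summable (fun q : ℤ × ℤ => ((q.1 + q.2 : ℤ) : ℝ) * (f q.1 * φ q.2)) := by
    rw [hid]; exact (summable_prod_mul hf1 hφ).add (summable_prod_mul hf hφ1')
  have hsq : (fun q : ℤ × ℤ => ((q.1 + q.2 : ℤ) : ℝ) ^ 2 * (f q.1 * φ q.2)) =
      fun q : ℤ × ℤ => (((q.1 : ℝ) ^ 2 * f q.1) * φ q.2 +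
        2 * (((q.1 : ℝ) * f q.1) * ((q.2 : ℝ) * φ q.2))) + f q.1 * ((q.2 : ℝ) ^ 2 * φ q.2) := by
    funext q; push_cast; ring
  have hsqS : Summable (fun q : ℤ × ℤ => ((q.1 + q.2 : ℤ) : ℝ) ^ 2 * (f q.1 * φ q.2)) := by
    rw [hsq]
    exact ((summable_prod_mul hf2 hφ).add ((summable_prod_mul hf1 hφ1').mul_left 2)).add
      (summable_prod_mul hf hφ2)
  -- summability of j^2 * g j
  have hg2sum : Summable (fun j : ℤ => (j : ℝ) ^ 2 * g j) := by
    have h0 : 0 ≤ fun p : ℤ × ℤ => (p.1 : ℝ) ^ 2 * (f p.2 * φ (p.1 - p.2)) := fun p =>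
      mul_nonneg (sq_nonneg _) (mul_nonneg (hf0 _) (hφ0 _))
    have hS : Summable (fun p : ℤ × ℤ => (p.1 : ℝ) ^ 2 * (f p.2 * φ (p.1 - p.2))) := by
      have h := (Equiv.summable_iff shearSub).mpr hsqS
      have : ((fun q : ℤ × ℤ => ((q.1 + q.2 : ℤ) : ℝ) ^ 2 * (f q.1 * φ q.2)) ∘ shearSub) =
          fun p : ℤ × ℤ => (p.1 : ℝ) ^ 2 * (f p.2 * φ (p.1 - p.2)) := by
        funext p
        have h2 : p.2 + (p.1 - p.2) = p.1 := by ring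
        simp only [Function.comp, shearSub, Equiv.coe_fn_mk, h2]
      rwa [this] at h
    have := ((summable_prod_of_nonneg h0).mp hS).2
    apply this.congr
    intro j
    show (∑' (y : ℤ), (j : ℝ) ^ 2 * (f y * φ (j - y))) = (j : ℝ) ^ 2 * ∑' (i : ℤ), f i * φ (j - i)
    exact tsum_mul_left
  -- moment values of g
  have hS0g : ∑' j, g j = (∑' i, f i) * (∑' i, φ i) := by
    have h := conv_moment f φ (fun _ => (1 : ℝ)) (by simpa using hP)
    simpa [tsum_prod_mul hf hφ] using h
  have hS1g : ∑' (j : ℤ), (j : ℝ) * g j =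
      (∑' i : ℤ, (i : ℝ) * f i) * (∑' i, φ i) + (∑' i, f i) * (∑' i : ℤ, (i : ℝ) * φ i) := by
    have h := conv_moment f φ (fun j => (j : ℝ)) hidS
    rw [h]
    calc ∑' q : ℤ × ℤ, ((q.1 + q.2 : ℤ) : ℝ) * (f q.1 * φ q.2)
        = ∑' q : ℤ × ℤ, (((q.1 : ℝ) * f q.1) * φ q.2 + f q.1 * ((q.2 : ℝ) * φ q.2)) := by
          rw [hid]
      _ = (∑' q : ℤ × ℤ, ((q.1 : ℝ) * f q.1) * φ q.2) +
            ∑' q : ℤ × ℤ, f q.1 * ((q.2 : ℝ) * φ q.2) :=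
          Summable.tsum_add (summable_prod_mul hf1 hφ) (summable_prod_mul hf hφ1')
      _ = _ := by rw [tsum_prod_mul hf1 hφ, tsum_prod_mul hf hφ1']
  have hS2g : ∑' (j : ℤ), (j : ℝ) ^ 2 * g j =
      ((∑' i : ℤ, (i : ℝ) ^ 2 * f i) * (∑' i, φ i) +
        2 * ((∑' i : ℤ, (i : ℝ) * f i) * (∑' i : ℤ, (i : ℝ) * φ i))) +
        (∑' i, f i) * (∑' i : ℤ, (i : ℝ) ^ 2 * φ i) := by
    have h := conv_moment f φ (fun j => (j : ℝ) ^ 2) hsqS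
    rw [h]
    calc ∑' q : ℤ × ℤ, ((q.1 + q.2 : ℤ) : ℝ) ^ 2 * (f q.1 * φ q.2)
        = ∑' q : ℤ × ℤ, ((((q.1 : ℝ) ^ 2 * f q.1) * φ q.2 +
            2 * (((q.1 : ℝ) * f q.1) * ((q.2 : ℝ) * φ q.2))) +
            f q.1 * ((q.2 : ℝ) ^ 2 * φ q.2)) := by rw [hsq]
      _ = ((∑' q : ℤ × ℤ, ((q.1 : ℝ) ^ 2 * f q.1) * φ q.2) +
            ∑' q : ℤ × ℤ, 2 * (((q.1 : ℝ) * f q.1) * ((q.2 : ℝ) * φ q.2))) +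
            ∑' q : ℤ × ℤ, f q.1 * ((q.2 : ℝ) ^ 2 * φ q.2) := by
          rw [Summable.tsum_add ((summable_prod_mul hf2 hφ).add
              ((summable_prod_mul hf1 hφ1').mul_left 2)) (summable_prod_mul hf hφ2),
            Summable.tsum_add (summable_prod_mul hf2 hφ) ((summable_prod_mul hf1 hφ1').mul_left 2)]
      _ = _ := by
          rw [tsum_mul_left, tsum_prod_mul hf2 hφ, tsum_prod_mul hf1 hφ1',
            tsum_prod_mul hf hφ2]
  -- key identities
  have hJf := Jfun_eq hf0 hf hf2
  have hJφ := Jfun_eq hφ0 hφ hφ2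
  have hJg := Jfun_eq hg0 hgsum hg2sum
  -- nonnegativity of Jfun φ
  have hJφ0 : 0 ≤ Jfun φ := by
    apply tsum_nonneg
    intro t
    exact mul_nonneg (sq_nonneg _) (tsum_nonneg fun i => mul_nonneg (hφ0 _) (hφ0 _))
  -- conclude
  rw [hJf, hJg, hS0g, hS1g, hS2g, hφ1]
  rw [hJφ, hφ1] at hJφ0
  nlinarith [sq_nonneg (∑' i, f i), mul_nonneg (sq_nonneg (∑' i, f i)) hJφ0]
end

section
/- Let f, φ : ℝ → ℝ be nonnegative integrable functions with ∫ φ(t) dt = 1, f not a.e. zero, and suppose ∫ t² f(t) dt and ∫ t² φ(t) dt are finite. Let g(t) = ∫ f(s) φ(t−s) ds, and define F = f ⊗ f, G = g ⊗ g (autocorrelations), J_F = ∫ t² F(t) dt, J_G = ∫ t² G(t) dt. Then J_G ≥ J_F. -/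
open MeasureTheory

/-- Convolution of functions on ℝ. -/
noncomputable def convR (f φ : ℝ → ℝ) (t : ℝ) : ℝ := ∫ s, f s * φ (t - s)

/-- Autocorrelation of a function on ℝ. -/
noncomputable def acorrR (f : ℝ → ℝ) (t : ℝ) : ℝ := ∫ s, f s * f (s + t)

/-- Focusing functional on ℝ. -/
noncomputable def JR (f : ℝ → ℝ) : ℝ := ∫ t, t ^ 2 * acorrR f t

namespace FocusingAux

lemma integrable_id_mul {f : ℝ → ℝ} (hf : Integrable f) (hf2 : Integrable (fun t => t ^ 2 * f t)) :
    Integrable (fun t => t * f t) := by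
  refine (hf.abs.add hf2.abs).mono (aestronglyMeasurable_id.mul hf.1) ?_
  filter_upwards with t
  have h1 : |t| ≤ 1 + t ^ 2 := by nlinarith [sq_abs t, sq_nonneg (|t| - 1), abs_nonneg t]
  simp only [Pi.add_apply, Real.norm_eq_abs, abs_abs, abs_mul, abs_pow, sq_abs]
  rw [abs_of_nonneg (show (0:ℝ) ≤ |f t| + t ^ 2 * |f t| by positivity)]
  nlinarith [abs_nonneg (f t)]

lemma conv_int {F G : ℝ → ℝ} (hF : Integrable F) (hG : Integrable G) :
    Integrable (fun p : ℝ × ℝ => F p.2 * G (p.1 - p.2)) (volume.prod volume) := by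
  simpa using hF.convolution_integrand (ContinuousLinearMap.mul ℝ ℝ) hG

section moments

variable {f ψ : ℝ → ℝ} (hf : Integrable f) (hψ : Integrable ψ)
  (hf2 : Integrable (fun t => t ^ 2 * f t)) (hψ2 : Integrable (fun t => t ^ 2 * ψ t))

/-- Shifted second-moment integral. -/
lemma shift2 (hψ : Integrable ψ) (hψ2 : Integrable (fun t => t ^ 2 * ψ t)) (s : ℝ) :
    (∫ t, t ^ 2 * ψ (t - s)) =
      (∫ u, u ^ 2 * ψ u) + 2 * s * (∫ u, u * ψ u) + s ^ 2 * (∫ u, ψ u) := by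
  have hψ1 := integrable_id_mul hψ hψ2
  have h := integral_add_right_eq_self (μ := volume) (fun t => t ^ 2 * ψ (t - s)) s
  rw [← h]
  have heq : (fun x : ℝ => (x + s) ^ 2 * ψ (x + s - s)) =
      fun x => (x ^ 2 * ψ x + (2 * s) * (x * ψ x)) + s ^ 2 * ψ x := by
    funext x; rw [add_sub_cancel_right]; ring
  calc (∫ x, (fun t => t ^ 2 * ψ (t - s)) (x + s))
      = ∫ x, ((x ^ 2 * ψ x + (2 * s) * (x * ψ x)) + s ^ 2 * ψ x) := by
        simp only []; rw [← heq]
    _ = (∫ u, u ^ 2 * ψ u) + 2 * s * (∫ u, u * ψ u) + s ^ 2 * (∫ u, ψ u) := by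
        rw [integral_add (f := fun x => x ^ 2 * ψ x + 2 * s * (x * ψ x))
            (g := fun x => s ^ 2 * ψ x) (hψ2.add (hψ1.const_mul (2 * s)))
            (hψ.const_mul (s ^ 2)),
          integral_add (f := fun x => x ^ 2 * ψ x) (g := fun x => 2 * s * (x * ψ x)) hψ2
            (hψ1.const_mul (2 * s)), integral_const_mul, integral_const_mul]

lemma shift1 (hψ : Integrable ψ) (hψ2 : Integrable (fun t => t ^ 2 * ψ t)) (s : ℝ) :
    (∫ t, t * ψ (t - s)) = (∫ u, u * ψ u) + s * (∫ u, ψ u) := by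
  have hψ1 := integrable_id_mul hψ hψ2
  have h := integral_add_right_eq_self (μ := volume) (fun t => t * ψ (t - s)) s
  rw [← h]
  have heq : (fun x : ℝ => (x + s) * ψ (x + s - s)) =
      fun x => x * ψ x + s * ψ x := by
    funext x; rw [add_sub_cancel_right]; ring
  calc (∫ x, (fun t => t * ψ (t - s)) (x + s))
      = ∫ x, (x * ψ x + s * ψ x) := by simp only []; rw [← heq]
    _ = (∫ u, u * ψ u) + s * (∫ u, ψ u) := by
        rw [integral_add (f := fun x => x * ψ x) (g := fun x => s * ψ x) hψ1
          (hψ.const_mul s), integral_const_mul]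

lemma shift0 (s : ℝ) : (∫ t, ψ (t - s)) = ∫ u, ψ u :=
  integral_sub_right_eq_self (μ := volume) ψ s

include hf hψ hf2 hψ2 in
lemma K2int :
    Integrable (fun p : ℝ × ℝ => p.1 ^ 2 * (f p.2 * ψ (p.1 - p.2))) (volume.prod volume) := by
  have hf1 := integrable_id_mul hf hf2
  have hψ1 := integrable_id_mul hψ hψ2
  have h1 : Integrable (fun p : ℝ × ℝ => f p.2 * ((p.1 - p.2) ^ 2 * ψ (p.1 - p.2)))
      (volume.prod volume) := conv_int hf hψ2
  have h2 : Integrable (fun p : ℝ × ℝ => (p.2 * f p.2) * ((p.1 - p.2) * ψ (p.1 - p.2)))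
      (volume.prod volume) := conv_int hf1 hψ1
  have h3 : Integrable (fun p : ℝ × ℝ => (p.2 ^ 2 * f p.2) * ψ (p.1 - p.2))
      (volume.prod volume) := conv_int hf2 hψ
  have heq : (fun p : ℝ × ℝ => p.1 ^ 2 * (f p.2 * ψ (p.1 - p.2))) =
      fun p : ℝ × ℝ => (f p.2 * ((p.1 - p.2) ^ 2 * ψ (p.1 - p.2)) +
        2 * ((p.2 * f p.2) * ((p.1 - p.2) * ψ (p.1 - p.2)))) +
        (p.2 ^ 2 * f p.2) * ψ (p.1 - p.2) := by
    funext p; ring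
  rw [heq]
  exact (h1.add (h2.const_mul 2)).add h3

include hf hψ hf2 hψ2 in
lemma K1int :
    Integrable (fun p : ℝ × ℝ => p.1 * (f p.2 * ψ (p.1 - p.2))) (volume.prod volume) := by
  have hf1 := integrable_id_mul hf hf2
  have hψ1 := integrable_id_mul hψ hψ2
  have h1 : Integrable (fun p : ℝ × ℝ => f p.2 * ((p.1 - p.2) * ψ (p.1 - p.2)))
      (volume.prod volume) := conv_int hf hψ1
  have h2 : Integrable (fun p : ℝ × ℝ => (p.2 * f p.2) * ψ (p.1 - p.2))
      (volume.prod volume) := conv_int hf1 hψ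
  have heq : (fun p : ℝ × ℝ => p.1 * (f p.2 * ψ (p.1 - p.2))) =
      fun p : ℝ × ℝ => f p.2 * ((p.1 - p.2) * ψ (p.1 - p.2)) +
        (p.2 * f p.2) * ψ (p.1 - p.2) := by
    funext p; ring
  rw [heq]
  exact h1.add h2

include hf hψ hf2 hψ2 in
lemma conv_mom2 :
    Integrable (fun t => t ^ 2 * convR f ψ t) ∧
    (∫ t, t ^ 2 * convR f ψ t) =
      (∫ t, t ^ 2 * f t) * (∫ t, ψ t) + 2 * (∫ t, t * f t) * (∫ t, t * ψ t) +
        (∫ t, f t) * (∫ t, t ^ 2 * ψ t) := by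
  have hf1 := integrable_id_mul hf hf2
  have K := K2int hf hψ hf2 hψ2
  have heq : (fun t => t ^ 2 * convR f ψ t) = fun t => ∫ s, t ^ 2 * (f s * ψ (t - s)) := by
    funext t; rw [convR, integral_const_mul]
  constructor
  · rw [heq]; exact K.integral_prod_left
  · rw [heq]
    rw [integral_integral_swap (f := fun t s => t ^ 2 * (f s * ψ (t - s))) K]
    have inner : ∀ s : ℝ, (∫ t, t ^ 2 * (f s * ψ (t - s))) =
        f s * ((∫ u, u ^ 2 * ψ u) + 2 * s * (∫ u, u * ψ u) + s ^ 2 * (∫ u, ψ u)) := by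
      intro s
      calc (∫ t, t ^ 2 * (f s * ψ (t - s))) = ∫ t, f s * (t ^ 2 * ψ (t - s)) := by
            congr 1; funext t; ring
        _ = f s * ∫ t, t ^ 2 * ψ (t - s) := integral_const_mul _ _
        _ = _ := by rw [shift2 hψ hψ2 s]
    simp only [inner]
    set A := (∫ u, u ^ 2 * ψ u) with hA
    set B := (∫ u, u * ψ u) with hB
    set C := (∫ u, ψ u) with hC
    have expand : (fun s : ℝ => f s * (A + 2 * s * B + s ^ 2 * C)) =
        fun s => (A * f s + (2 * B) * (s * f s)) + C * (s ^ 2 * f s) := by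
      funext s; ring
    rw [expand, integral_add (f := fun s => A * f s + 2 * B * (s * f s))
        (g := fun s => C * (s ^ 2 * f s)) ((hf.const_mul A).add (hf1.const_mul (2 * B)))
        (hf2.const_mul C),
      integral_add (f := fun s => A * f s) (g := fun s => 2 * B * (s * f s))
        (hf.const_mul A) (hf1.const_mul (2 * B)),
      integral_const_mul, integral_const_mul, integral_const_mul]
    ring

include hf hψ hf2 hψ2 in
lemma conv_mom1 :
    (∫ t, t * convR f ψ t) =
      (∫ t, t * f t) * (∫ t, ψ t) + (∫ t, f t) * (∫ t, t * ψ t) := by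
  have hf1 := integrable_id_mul hf hf2
  have K := K1int hf hψ hf2 hψ2
  have heq : (fun t => t * convR f ψ t) = fun t => ∫ s, t * (f s * ψ (t - s)) := by
    funext t; rw [convR, integral_const_mul]
  rw [heq]
  rw [integral_integral_swap (f := fun t s => t * (f s * ψ (t - s))) K]
  have inner : ∀ s : ℝ, (∫ t, t * (f s * ψ (t - s))) =
      f s * ((∫ u, u * ψ u) + s * (∫ u, ψ u)) := by
    intro s
    calc (∫ t, t * (f s * ψ (t - s))) = ∫ t, f s * (t * ψ (t - s)) := by
          congr 1; funext t; ring
      _ = f s * ∫ t, t * ψ (t - s) := integral_const_mul _ _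
      _ = _ := by rw [shift1 hψ hψ2 s]
  simp only [inner]
  set B := (∫ u, u * ψ u) with hB
  set C := (∫ u, ψ u) with hC
  have expand : (fun s : ℝ => f s * (B + s * C)) = fun s => B * f s + C * (s * f s) := by
    funext s; ring
  rw [expand, integral_add (f := fun s => B * f s) (g := fun s => C * (s * f s))
      (hf.const_mul B) (hf1.const_mul C), integral_const_mul, integral_const_mul]
  ring

include hf hψ in
lemma conv_mom0 :
    Integrable (convR f ψ) ∧ (∫ t, convR f ψ t) = (∫ t, f t) * (∫ t, ψ t) := by
  have K : Integrable (fun p : ℝ × ℝ => f p.2 * ψ (p.1 - p.2)) (volume.prod volume) :=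
    conv_int hf hψ
  constructor
  · exact K.integral_prod_left
  · rw [show (fun t => convR f ψ t) = fun t => ∫ s, f s * ψ (t - s) from rfl]
    rw [integral_integral_swap (f := fun t s => f s * ψ (t - s)) K]
    have inner : ∀ s : ℝ, (∫ t, f s * ψ (t - s)) = f s * ∫ u, ψ u := by
      intro s
      rw [integral_const_mul, shift0 s]
    simp only [inner]
    rw [integral_mul_const]

end moments

lemma acorr_eq_conv (f : ℝ → ℝ) : acorrR f = convR (fun s => f (-s)) f := by
  funext t
  rw [acorrR, convR, ← integral_neg_eq_self (fun s => f (-s) * f (t - s)) volume]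
  congr 1
  funext x
  simp only [neg_neg, sub_neg_eq_add]
  rw [add_comm t x]

lemma mom1_neg (f : ℝ → ℝ) : (∫ t, t * f (-t)) = - ∫ t, t * f t := by
  rw [← integral_neg_eq_self (fun t => t * f (-t)) volume]
  simp only [neg_neg, neg_mul]
  rw [integral_neg]

lemma mom2_neg (f : ℝ → ℝ) : (∫ t, t ^ 2 * f (-t)) = ∫ t, t ^ 2 * f t := by
  rw [← integral_neg_eq_self (fun t => t ^ 2 * f (-t)) volume]
  simp only [neg_neg, neg_sq]

lemma mom0_neg (f : ℝ → ℝ) : (∫ t, f (-t)) = ∫ t, f t :=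
  integral_neg_eq_self f volume

lemma integrable_sq_neg {f : ℝ → ℝ} (hf2 : Integrable (fun t => t ^ 2 * f t)) :
    Integrable (fun t => t ^ 2 * f (-t)) := by
  have := hf2.comp_neg
  refine this.congr (Filter.Eventually.of_forall fun t => ?_)
  simp [neg_sq]

/-- Autocorrelation second moment formula. -/
lemma JR_formula {f : ℝ → ℝ} (hf : Integrable f)
    (hf2 : Integrable (fun t => t ^ 2 * f t)) :
    JR f = 2 * (∫ t, f t) * (∫ t, t ^ 2 * f t) - 2 * (∫ t, t * f t) ^ 2 := by
  have hfn : Integrable (fun t => f (-t)) := hf.comp_neg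
  have hfn2 : Integrable (fun t => t ^ 2 * f (-t)) := integrable_sq_neg hf2
  have h := (conv_mom2 hfn hf hfn2 hf2).2
  rw [JR, acorr_eq_conv f, h, mom0_neg, mom1_neg, mom2_neg]
  ring

end FocusingAux

open FocusingAux in
/-- continuous focusing inequality `J_G ≥ J_F`. -/
theorem focusing_inequality_continuous
    (f φ : ℝ → ℝ)
    (hf0 : ∀ t, 0 ≤ f t) (hφ0 : ∀ t, 0 ≤ φ t)
    (hf : Integrable f) (hφ : Integrable φ)
    (hf2 : Integrable (fun t => t ^ 2 * f t))
    (hφ2 : Integrable (fun t => t ^ 2 * φ t))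
    (hφ1 : ∫ t, φ t = 1)
    (hfne : ¬ (f =ᵐ[volume] 0)) :
    JR f ≤ JR (convR f φ) := by
  have hφ1' := integrable_id_mul hφ hφ2
  -- properties of g = convR f φ
  have hg : Integrable (convR f φ) := (conv_mom0 hf hφ).1
  have hg2 : Integrable (fun t => t ^ 2 * convR f φ t) := (conv_mom2 hf hφ hf2 hφ2).1
  have hg0 : (∫ t, convR f φ t) = (∫ t, f t) := by
    rw [(conv_mom0 hf hφ).2, hφ1, mul_one]
  have hg1 : (∫ t, t * convR f φ t) =
      (∫ t, t * f t) + (∫ t, f t) * (∫ t, t * φ t) := by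
    rw [conv_mom1 hf hφ hf2 hφ2, hφ1, mul_one]
  have hgm2 : (∫ t, t ^ 2 * convR f φ t) =
      (∫ t, t ^ 2 * f t) + 2 * (∫ t, t * f t) * (∫ t, t * φ t) +
        (∫ t, f t) * (∫ t, t ^ 2 * φ t) := by
    rw [(conv_mom2 hf hφ hf2 hφ2).2, hφ1, mul_one]
  -- the two JR formulas
  have hJf := JR_formula hf hf2
  have hJg := JR_formula hg hg2
  rw [hJf, hJg, hg0, hg1, hgm2]
  -- variance inequality
  have hvar : (∫ t, t * φ t) ^ 2 ≤ ∫ t, t ^ 2 * φ t := by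
    set m := (∫ t, t * φ t) with hm
    have h0 : 0 ≤ ∫ t, (t - m) ^ 2 * φ t :=
      integral_nonneg fun t => mul_nonneg (sq_nonneg _) (hφ0 t)
    have hexp : (fun t : ℝ => (t - m) ^ 2 * φ t) =
        fun t => (t ^ 2 * φ t - (2 * m) * (t * φ t)) + m ^ 2 * φ t := by
      funext t; ring
    rw [hexp, integral_add (f := fun t => t ^ 2 * φ t - 2 * m * (t * φ t))
        (g := fun t => m ^ 2 * φ t) (hφ2.sub (hφ1'.const_mul (2 * m)))
        (hφ.const_mul (m ^ 2)),
      integral_sub (f := fun t => t ^ 2 * φ t) (g := fun t => 2 * m * (t * φ t)) hφ2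
        (hφ1'.const_mul (2 * m)), integral_const_mul, integral_const_mul, hφ1] at h0
    nlinarith [h0]
  nlinarith [sq_nonneg (∫ t, f t), hvar, sq_nonneg ((∫ t, f t) * (∫ t, t * φ t))]
end

section
/- The continuous analogue of the equality case: if f, φ : ℝ → ℝ are nonnegative, integrable, with finite second moments, ∫ φ = 1, f not a.e. 0, g = f * φ, and ∫ t² (g⊗g)(t) dt = ∫ t² (f⊗f)(t) dt, then φ equals the Dirac delta (i.e., as a probability measure, φ dt is the point mass at 0); contrapositively, if φ is an integrable function (absolutely continuous measure) with ∫ φ = 1, then the inequality is strict: ∫ t² (g⊗g) dt > ∫ t² (f⊗f) dt. -/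
/-!
Since `acorrR h` is the convolution of `t ↦ h (-t)` with `h`, both sides are second moments of
convolutions. Expanding `(s + u) ^ 2` under Fubini gives `JR h = 2 (M₀ M₂ - M₁ ^ 2)` for the
moments `Mₖ = ∫ tᵏ h`, and for `g = f * φ` these combine into
`JR g = (∫ φ) ^ 2 JR f + (∫ f) ^ 2 JR φ`. Finally `M₀ (M₀ M₂ - M₁ ^ 2) = ∫ (M₀ t - M₁) ^ 2 h t`
is positive for a nonnegative `h` that is not a.e. zero, because `M₀ t - M₁` vanishes at a single
point only: a function, unlike a point mass, has positive variance.
-/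

open MeasureTheory

theorem MeasureTheory.Integrable.id_mul_of_sq_mul {μ : Measure ℝ} {h : ℝ → ℝ}
    (hh : Integrable h μ) (hh2 : Integrable (fun t => t ^ 2 * h t) μ) :
    Integrable (fun t => t * h t) μ := by
  refine (hh.add hh2).mono (aestronglyMeasurable_id.mul hh.1) (ae_of_all _ fun t => ?_)
  have ht : |t| ≤ 1 + t ^ 2 := by nlinarith [sq_nonneg (|t| - 1), sq_abs t]
  calc ‖t * h t‖ = |t| * |h t| := by rw [Real.norm_eq_abs, abs_mul]
    _ ≤ (1 + t ^ 2) * |h t| := by gcongr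
    _ = ‖h t + t ^ 2 * h t‖ := by
      have hpos : (0 : ℝ) ≤ 1 + t ^ 2 := by positivity
      rw [Real.norm_eq_abs, ← one_add_mul, abs_mul, abs_of_nonneg hpos]

theorem integral_pos_of_not_ae_eq_zero {α : Type*} [MeasurableSpace α] {μ : Measure α}
    {g : α → ℝ} (hg0 : 0 ≤ g) (hg : Integrable g μ) (hne : ¬ g =ᵐ[μ] 0) : 0 < ∫ x, g x ∂μ :=
  (integral_nonneg hg0).lt_of_ne fun h => hne ((integral_eq_zero_iff_of_nonneg hg0 hg).1 h.symm)

theorem integral_pow_mul_comp_neg (h : ℝ → ℝ) (k : ℕ) :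
    ∫ t, t ^ k * h (-t) = (-1) ^ k * ∫ t, t ^ k * h t := by
  have hneg := integral_neg_eq_self (fun t => (-t) ^ k * h t) volume
  simp only [neg_neg] at hneg
  rw [hneg, ← integral_const_mul]
  congr 1 with t
  rw [neg_pow]
  ring

section Convolution

variable {f φ w : ℝ → ℝ}

theorem integrable_convR_kernel
    (hw : Integrable (fun p : ℝ × ℝ => w (p.1 + p.2) * (f p.1 * φ p.2)) (volume.prod volume)) :
    Integrable (fun q : ℝ × ℝ => w q.1 * (f q.2 * φ (q.1 - q.2))) (volume.prod volume) := by
  simpa [Function.comp_def] using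
    (measurePreserving_prod_sub_swap volume volume).integrable_comp_of_integrable hw

theorem integrable_mul_convR
    (hw : Integrable (fun p : ℝ × ℝ => w (p.1 + p.2) * (f p.1 * φ p.2)) (volume.prod volume)) :
    Integrable (fun t => w t * convR f φ t) :=
  (integrable_convR_kernel hw).integral_prod_left.congr
    (ae_of_all _ fun t => integral_const_mul (w t) _)

theorem integral_mul_convR
    (hw : Integrable (fun p : ℝ × ℝ => w (p.1 + p.2) * (f p.1 * φ p.2)) (volume.prod volume)) :
    ∫ t, w t * convR f φ t
      = ∫ p : ℝ × ℝ, w (p.1 + p.2) * (f p.1 * φ p.2) ∂(volume.prod volume) := by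
  have hT := measurePreserving_prod_sub_swap (volume : Measure ℝ) volume
  calc ∫ t, w t * convR f φ t = ∫ t, ∫ s, w t * (f s * φ (t - s)) := by
        simp only [convR, integral_const_mul]
    _ = ∫ q : ℝ × ℝ, w q.1 * (f q.2 * φ (q.1 - q.2)) ∂(volume.prod volume) :=
        (integral_prod _ (integrable_convR_kernel hw)).symm
    _ = ∫ p : ℝ × ℝ, w (p.1 + p.2) * (f p.1 * φ p.2) ∂(volume.prod volume) := by
        have hmap := integral_map hT.measurable.aemeasurable
          (hT.map_eq ▸ hw.aestronglyMeasurable)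
        rw [hT.map_eq] at hmap
        simpa using hmap.symm

theorem integrable_convR (hf : Integrable f) (hφ : Integrable φ) : Integrable (convR f φ) := by
  simpa using integrable_mul_convR (w := fun _ => 1) (by simpa using hf.mul_prod hφ)

theorem integral_convR (hf : Integrable f) (hφ : Integrable φ) :
    ∫ t, convR f φ t = (∫ t, f t) * ∫ t, φ t := by
  simpa [integral_prod_mul] using
    integral_mul_convR (w := fun _ => 1) (by simpa using hf.mul_prod hφ)

theorem integral_id_mul_convR (hf : Integrable f) (hf2 : Integrable (fun t => t ^ 2 * f t))
    (hφ : Integrable φ) (hφ2 : Integrable (fun t => t ^ 2 * φ t)) :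
    ∫ t, t * convR f φ t = (∫ t, t * f t) * (∫ t, φ t) + (∫ t, f t) * ∫ t, t * φ t := by
  have hi₁ := (hf.id_mul_of_sq_mul hf2).mul_prod hφ
  have hi₂ := hf.mul_prod (hφ.id_mul_of_sq_mul hφ2)
  have hw : Integrable (fun p : ℝ × ℝ => (p.1 + p.2) * (f p.1 * φ p.2)) (volume.prod volume) :=
    (hi₁.fun_add hi₂).congr (ae_of_all _ fun p => by ring)
  calc ∫ t, t * convR f φ t
      = ∫ p : ℝ × ℝ, (p.1 * f p.1 * φ p.2 + f p.1 * (p.2 * φ p.2)) ∂(volume.prod volume) := by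
        rw [integral_mul_convR (w := fun t => t) hw]
        congr 1 with p
        ring
    _ = _ := by
        rw [integral_add hi₁ hi₂, integral_prod_mul (fun s => s * f s) φ,
          integral_prod_mul f (fun u => u * φ u)]

theorem integrable_sq_mul_convR (hf : Integrable f) (hf2 : Integrable (fun t => t ^ 2 * f t))
    (hφ : Integrable φ) (hφ2 : Integrable (fun t => t ^ 2 * φ t)) :
    Integrable (fun t => t ^ 2 * convR f φ t) := by
  have hi₁ := hf2.mul_prod hφ
  have hi₂ := ((hf.id_mul_of_sq_mul hf2).mul_prod (hφ.id_mul_of_sq_mul hφ2)).const_mul 2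
  have hi₃ := hf.mul_prod hφ2
  exact integrable_mul_convR (w := fun t => t ^ 2) <| ((hi₁.fun_add hi₂).fun_add hi₃).congr
    (ae_of_all _ fun p => by ring)

theorem integral_sq_mul_convR (hf : Integrable f) (hf2 : Integrable (fun t => t ^ 2 * f t))
    (hφ : Integrable φ) (hφ2 : Integrable (fun t => t ^ 2 * φ t)) :
    ∫ t, t ^ 2 * convR f φ t = (∫ t, t ^ 2 * f t) * (∫ t, φ t)
      + 2 * ((∫ t, t * f t) * ∫ t, t * φ t) + (∫ t, f t) * ∫ t, t ^ 2 * φ t := by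
  have hi₁ := hf2.mul_prod hφ
  have hi₂ := ((hf.id_mul_of_sq_mul hf2).mul_prod (hφ.id_mul_of_sq_mul hφ2)).const_mul 2
  have hi₃ := hf.mul_prod hφ2
  have hw : Integrable (fun p : ℝ × ℝ => (p.1 + p.2) ^ 2 * (f p.1 * φ p.2))
      (volume.prod volume) :=
    ((hi₁.fun_add hi₂).fun_add hi₃).congr (ae_of_all _ fun p => by ring)
  calc ∫ t, t ^ 2 * convR f φ t
      = ∫ p : ℝ × ℝ, (p.1 ^ 2 * f p.1 * φ p.2 + 2 * (p.1 * f p.1 * (p.2 * φ p.2))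
          + f p.1 * (p.2 ^ 2 * φ p.2)) ∂(volume.prod volume) := by
        rw [integral_mul_convR (w := fun t => t ^ 2) hw]
        congr 1 with p
        ring
    _ = _ := by
        rw [integral_add (hi₁.fun_add hi₂) hi₃, integral_add hi₁ hi₂, integral_const_mul,
          integral_prod_mul (fun s => s ^ 2 * f s) φ,
          integral_prod_mul (fun s => s * f s) (fun u => u * φ u),
          integral_prod_mul f (fun u => u ^ 2 * φ u)]

end Convolution

theorem acorrR_eq_convR (h : ℝ → ℝ) : acorrR h = convR (fun s => h (-s)) h := by
  ext t
  rw [convR, ← integral_neg_eq_self]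
  simp [acorrR, add_comm]

theorem JR_eq_moments {h : ℝ → ℝ} (hh : Integrable h) (hh2 : Integrable (fun t => t ^ 2 * h t)) :
    JR h = 2 * ((∫ t, h t) * (∫ t, t ^ 2 * h t) - (∫ t, t * h t) ^ 2) := by
  have hh2_neg : Integrable (fun t => t ^ 2 * h (-t)) := by simpa using hh2.comp_neg
  have hM₁ := integral_pow_mul_comp_neg h 1
  simp only [pow_one] at hM₁
  rw [JR, acorrR_eq_convR, integral_sq_mul_convR hh.comp_neg hh2_neg hh hh2,
    integral_neg_eq_self h, hM₁, integral_pow_mul_comp_neg h 2]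
  ring

theorem JR_convR_eq {f φ : ℝ → ℝ} (hf : Integrable f) (hf2 : Integrable (fun t => t ^ 2 * f t))
    (hφ : Integrable φ) (hφ2 : Integrable (fun t => t ^ 2 * φ t)) :
    JR (convR f φ) = (∫ t, φ t) ^ 2 * JR f + (∫ t, f t) ^ 2 * JR φ := by
  rw [JR_eq_moments (integrable_convR hf hφ) (integrable_sq_mul_convR hf hf2 hφ hφ2),
    integral_convR hf hφ, integral_id_mul_convR hf hf2 hφ hφ2,
    integral_sq_mul_convR hf hf2 hφ hφ2, JR_eq_moments hf hf2, JR_eq_moments hφ hφ2]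
  ring

theorem JR_pos {h : ℝ → ℝ} (h0 : 0 ≤ h) (hh : Integrable h)
    (hh2 : Integrable (fun t => t ^ 2 * h t)) (hne : ¬ h =ᵐ[volume] 0) : 0 < JR h := by
  set M₀ := ∫ t, h t
  set M₁ := ∫ t, t * h t
  set M₂ := ∫ t, t ^ 2 * h t
  have hM₀ : 0 < M₀ := integral_pos_of_not_ae_eq_zero h0 hh hne
  have hi₂ := hh2.const_mul (M₀ ^ 2)
  have hi₁ := (hh.id_mul_of_sq_mul hh2).const_mul (2 * M₀ * M₁)
  have hi₀ := hh.const_mul (M₁ ^ 2)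
  have hexpand : (fun t => (M₀ * t - M₁) ^ 2 * h t)
      = fun t => M₀ ^ 2 * (t ^ 2 * h t) - 2 * M₀ * M₁ * (t * h t) + M₁ ^ 2 * h t := by
    ext t
    ring
  have hvar : ∫ t, (M₀ * t - M₁) ^ 2 * h t = M₀ * (M₀ * M₂ - M₁ ^ 2) := by
    rw [hexpand, integral_add (hi₂.sub' hi₁) hi₀, integral_sub hi₂ hi₁, integral_const_mul,
      integral_const_mul, integral_const_mul]
    ring
  have hvar_pos : 0 < ∫ t, (M₀ * t - M₁) ^ 2 * h t := by
    refine integral_pos_of_not_ae_eq_zero (fun t => mul_nonneg (sq_nonneg _) (h0 t))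
      (hexpand ▸ (hi₂.sub' hi₁).fun_add hi₀) fun hzero => hne ?_
    filter_upwards [hzero, Measure.ae_ne volume (M₁ / M₀)] with t ht ht_ne
    have hlin : M₀ * t - M₁ ≠ 0 := fun heq => ht_ne (by rw [eq_div_iff hM₀.ne']; linarith)
    simpa [hlin] using ht
  rw [JR_eq_moments hh hh2]
  linarith [pos_of_mul_pos_right (hvar ▸ hvar_pos) hM₀.le]

/-- continuous equality case — if `φ` is an integrable density
(a genuine function) of unit mass, the focusing inequality is strict. -/
theorem focusing_inequality_continuous_strict
    (f φ : ℝ → ℝ)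
    (hf0 : ∀ t, 0 ≤ f t) (hφ0 : ∀ t, 0 ≤ φ t)
    (hf : Integrable f) (hφ : Integrable φ)
    (hf2 : Integrable (fun t => t ^ 2 * f t))
    (hφ2 : Integrable (fun t => t ^ 2 * φ t))
    (hφ1 : ∫ t, φ t = 1)
    (hfne : ¬ (f =ᵐ[volume] 0)) :
    JR f < JR (convR f φ) := by
  have hf_mass : 0 < ∫ t, f t := integral_pos_of_not_ae_eq_zero hf0 hf hfne
  have hφne : ¬ φ =ᵐ[volume] 0 := fun hφ_zero => by
    simp [integral_congr_ae hφ_zero] at hφ1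
  have hJφ : 0 < JR φ := JR_pos hφ0 hφ hφ2 hφne
  rw [JR_convR_eq hf hf2 hφ hφ2, hφ1, one_pow, one_mul]
  linarith [mul_pos (pow_pos hf_mass 2) hJφ]
end
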